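/- The product ∘ on the vector space kP spanned by planar rooted trees, given on Dyck-word representatives by the asymmetric shuffle (inserting the irreducible components c_1,…,c_k of the word of T, preserving their relative order, into arbitrary positions of the word of T'), is associative: (a∘b)∘c = a∘(b∘c) for all a, b, c ∈ kP, with the one-vertex tree • as a two-sided unit. -/

import Mathlib

/-! ### Planar rooted trees -/

/-- A planar rooted tree: a root with an ordered list of branches.
`PTree.node [T₁,…,T_k]` is `B₊(T₁⋯T_k)`; `PTree.node []` is the one-vertex tree `•`. -/
inductive PTree : Type where
  | node : List PTree → PTree

instance : Inhabited PTree := ⟨.node []⟩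

noncomputable instance : DecidableEq PTree := Classical.decEq _

/-! ### Dyck words and the shuffle product on planar rooted trees -/

namespace PTree

/-- The Dyck word (balanced bracket arrangement) of a planar rooted tree:
`word (B₊(T₁⋯T_k)) = ⟨w₁⟩⟨w₂⟩⋯⟨w_k⟩` where `wᵢ` is the word of `Tᵢ`
(with `true = ⟨` and `false = ⟩`). -/
def word : PTree → List Bool
  | .node l => (l.attach.map (fun x => true :: (word x.1 ++ [false]))).flatten
decreasing_by
  have h := List.sizeOf_lt_of_mem x.2
  simp only [PTree.node.sizeOf_spec]
  omega

/-- The irreducible components `⟨w₁⟩,…,⟨w_k⟩` of the word of a planar rooted tree. -/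
def blocks : PTree → List (List Bool)
  | .node l => l.map (fun t => true :: (word t ++ [false]))

end PTree

/-- All words obtained by shuffling the given blocks (kept atomic and in their
relative order) into the given word. -/
def shuffles : List (List Bool) → List Bool → List (List Bool)
  | [], w => [w]
  | b :: bs, [] => (shuffles bs []).map (b ++ ·)
  | b :: bs, x :: w =>
      ((shuffles bs (x :: w)).map (b ++ ·)) ++ ((shuffles (b :: bs) w).map (x :: ·))
termination_by bs w => bs.length + w.length
decreasing_by all_goals simp +arith +decide

/-- Stack-based parser turning a balanced word into the forest it represents. -/
def parseAux : List Bool → List (List PTree) → List PTree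
  | [], stack => (stack.headD []).reverse
  | true :: w, stack => parseAux w ([] :: stack)
  | false :: w, stack =>
      match stack with
      | l :: l' :: rest => parseAux w ((PTree.node l.reverse :: l') :: rest)
      | _ => []

/-- The forest represented by a balanced word. -/
def parseForest (w : List Bool) : List PTree := parseAux w [[]]

/-- The planar rooted tree whose word is the given balanced word. -/
def parseTree (w : List Bool) : PTree := PTree.node (parseForest w)

/-- The product `∘` on `kP`: shuffle the irreducible components of the word of `T`
into the word of `T'` (so `• ∘ T' = T'`). -/
noncomputable def pMul (k : Type*) [Semiring k] (T T' : PTree) : PTree →₀ k :=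
  ((shuffles (PTree.blocks T) (PTree.word T')).map
    (fun w => Finsupp.single (parseTree w) (1 : k))).sum

/-- Bilinear extension of `∘` to `kP`. -/
noncomputable def pMulF {k : Type*} [CommSemiring k] (f g : PTree →₀ k) : PTree →₀ k :=
  f.sum (fun T a => g.sum (fun T' b => (a * b) • pMul k T T'))

/-!
Everything is computed on Dyck words: `parseTree` inverts `PTree.word` on balanced words, and
shuffling blocks into a balanced word keeps it balanced. On basis trees, associativity thus
becomes the multiset identity
  `⋃_{v ∈ sh(B, w')} sh(comp v, w'') = ⋃_{u ∈ sh(comp w', w'')} sh(B, u)`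
for a balanced word `w'` and a list `B` of blocks, where `comp` lists the irreducible
components. It is proved by induction on `w' = ⟨p⟩q`: both sides expand into the same sum over
the splittings of `B` into four consecutive parts and the cuts of `w''` at the place of `⟨p⟩`,
and the induction hypothesis for `q` matches what comes after `⟨p⟩`.
-/

inductive IsBalanced : List Bool → Prop
  | nil : IsBalanced []
  | bracket_append {u v : List Bool} :
      IsBalanced u → IsBalanced v → IsBalanced (true :: u ++ false :: v)

def IsBlock (b : List Bool) : Prop := ∃ u, IsBalanced u ∧ b = true :: u ++ [false]

namespace IsBalanced

theorem append {u v : List Bool} (hu : IsBalanced u) (hv : IsBalanced v) :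
    IsBalanced (u ++ v) := by
  induction hu with
  | nil => exact hv
  | bracket_append hu _ _ ih => simpa using bracket_append hu ih

theorem block_append {b v : List Bool} (hb : IsBlock b) (hv : IsBalanced v) :
    IsBalanced (b ++ v) := by
  obtain ⟨u, hu, rfl⟩ := hb
  simpa using bracket_append hu hv

theorem flatten {L : List (List Bool)} (hL : ∀ b ∈ L, IsBlock b) : IsBalanced L.flatten := by
  induction L with
  | nil => exact nil
  | cons b L ih => exact block_append (hL b (by simp)) (ih fun b hb => hL b (by simp [hb]))

end IsBalanced

/-- The depth reached after reading a bracket word from depth `n`, or `none` if the depth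
would become negative. -/
def depthAfter : List Bool → ℕ → Option ℕ
  | [], n => some n
  | true :: w, n => depthAfter w (n + 1)
  | false :: _, 0 => none
  | false :: w, n + 1 => depthAfter w n

theorem depthAfter_append (u v : List Bool) (n : ℕ) :
    depthAfter (u ++ v) n = (depthAfter u n).bind (depthAfter v) := by
  induction u generalizing n with
  | nil => rfl
  | cons x u ih =>
    cases x
    · cases n <;> simp [depthAfter, ih]
    · exact ih (n + 1)

theorem IsBalanced.depthAfter_eq {w : List Bool} (hw : IsBalanced w) (n : ℕ) :
    depthAfter w n = some n := by
  induction hw generalizing n with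
  | nil => rfl
  | bracket_append _ _ ihu ihv =>
    simp [depthAfter, depthAfter_append, ihu, ihv]

theorem IsBlock.depthAfter_eq {b : List Bool} (hb : IsBlock b) (n : ℕ) :
    depthAfter b n = some n := by
  obtain ⟨u, hu, rfl⟩ := hb
  simp [depthAfter, depthAfter_append, hu.depthAfter_eq]

theorem exists_eq_append_false_cons_of_depthAfter (w : List Bool) (n : ℕ)
    (h : depthAfter w (n + 1) = some 0) :
    ∃ u v, w = u ++ false :: v ∧ depthAfter u n = some 0 ∧ depthAfter v 0 = some 0 := by
  induction w generalizing n with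
  | nil => simp [depthAfter] at h
  | cons x w ih =>
    cases x
    · cases n with
      | zero => exact ⟨[], w, rfl, rfl, h⟩
      | succ n =>
        obtain ⟨u, v, rfl, hu, hv⟩ := ih n h
        exact ⟨false :: u, v, rfl, hu, hv⟩
    · obtain ⟨u, v, rfl, hu, hv⟩ := ih (n + 1) h
      exact ⟨true :: u, v, rfl, hu, hv⟩

theorem isBalanced_of_depthAfter {w : List Bool} (hw : depthAfter w 0 = some 0) :
    IsBalanced w := by
  induction h : w.length using Nat.strong_induction_on generalizing w with
  | _ n ih =>
    match w, hw with
    | [], _ => exact .nil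
    | true :: w, hw =>
      obtain ⟨u, v, rfl, hu, hv⟩ := exists_eq_append_false_cons_of_depthAfter w 0 hw
      simp only [List.length_cons, List.length_append] at h
      simpa using (ih _ (by omega) hu rfl).bracket_append (ih _ (by omega) hv rfl)

theorem depthAfter_of_mem_shuffles {B : List (List Bool)} {w v : List Bool}
    (hB : ∀ b ∈ B, IsBlock b) (hv : v ∈ shuffles B w) (n : ℕ) :
    depthAfter v n = depthAfter w n := by
  induction B, w using shuffles.induct generalizing v n with
  | case1 w =>
    rw [shuffles, List.mem_singleton] at hv
    rw [hv]
  | case2 b B ih =>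
    rw [shuffles, List.mem_map] at hv
    obtain ⟨v, hv, rfl⟩ := hv
    rw [depthAfter_append, (hB b (by simp)).depthAfter_eq n, Option.bind_some]
    exact ih (fun b hb => hB b (by simp [hb])) hv n
  | case3 b B x w ih₁ ih₂ =>
    rw [shuffles, List.mem_append, List.mem_map, List.mem_map] at hv
    rcases hv with ⟨v, hv, rfl⟩ | ⟨v, hv, rfl⟩
    · rw [depthAfter_append, (hB b (by simp)).depthAfter_eq n, Option.bind_some]
      exact ih₁ (fun b hb => hB b (by simp [hb])) hv n
    · cases x
      · cases n <;> simp only [depthAfter, ih₂ hB hv]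
      · exact ih₂ hB hv (n + 1)

theorem IsBalanced.of_mem_shuffles {B : List (List Bool)} {w v : List Bool}
    (hB : ∀ b ∈ B, IsBlock b) (hw : IsBalanced w) (hv : v ∈ shuffles B w) : IsBalanced v :=
  isBalanced_of_depthAfter ((depthAfter_of_mem_shuffles hB hv 0).trans (hw.depthAfter_eq 0))

namespace PTree

theorem word_node (l : List PTree) :
    word (node l) = (l.map fun t => true :: (word t ++ [false])).flatten := by
  rw [word]
  congr 1
  simp

theorem word_eq_flatten_blocks : ∀ T : PTree, word T = (blocks T).flatten
  | node l => word_node l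

theorem isBlock_of_mem_blocks : ∀ (T : PTree), ∀ b ∈ blocks T, IsBlock b
  | node l, b, hb => by
    obtain ⟨t, ht, rfl⟩ := List.mem_map.mp hb
    refine ⟨word t, ?_, rfl⟩
    rw [word_eq_flatten_blocks]
    exact IsBalanced.flatten (isBlock_of_mem_blocks t)
termination_by T => sizeOf T
decreasing_by
  have := List.sizeOf_lt_of_mem ht
  simp only [node.sizeOf_spec]
  omega

theorem isBalanced_word (T : PTree) : IsBalanced (word T) :=
  word_eq_flatten_blocks T ▸ IsBalanced.flatten (isBlock_of_mem_blocks T)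

end PTree

open PTree

theorem parseAux_append {w : List Bool} (hw : IsBalanced w) (rest : List Bool) (s : List PTree)
    (stack : List (List PTree)) :
    parseAux (w ++ rest) (s :: stack) = parseAux rest (((parseForest w).reverse ++ s) :: stack) := by
  induction hw generalizing rest s stack with
  | nil => simp [parseForest, parseAux]
  | @bracket_append u v _ _ ihu ihv =>
    have key : ∀ r s' st, parseAux ((true :: u ++ false :: v) ++ r) (s' :: st) =
        parseAux r (((parseForest v).reverse ++ node (parseForest u) :: s') :: st) := by
      intro r s' st
      simp only [List.cons_append, List.append_assoc, parseAux, ihu, List.reverse_reverse,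
        List.append_nil, ihv]
    have hforest : parseForest (true :: u ++ false :: v) = node (parseForest u) :: parseForest v := by
      simpa [parseForest, parseAux] using key [] [] []
    rw [key, hforest]
    simp

theorem parseForest_bracket_append {u v : List Bool} (hu : IsBalanced u) (hv : IsBalanced v) :
    parseForest (true :: u ++ false :: v) = node (parseForest u) :: parseForest v := by
  rw [parseForest, show true :: u ++ false :: v = true :: (u ++ false :: (v ++ [])) by simp,
    parseAux, parseAux_append hu, parseAux, parseAux_append hv]
  simp [parseAux]

theorem word_parseTree {w : List Bool} (hw : IsBalanced w) : word (parseTree w) = w := by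
  induction hw with
  | nil => simp [parseTree, parseForest, parseAux, word_node]
  | @bracket_append u v hu hv ihu ihv =>
    rw [parseTree, parseForest_bracket_append hu hv, word_node, List.map_cons, List.flatten_cons,
      ← word_node]
    change true :: (word (parseTree u) ++ [false]) ++ word (parseTree v) = _
    rw [ihu, ihv]
    simp

theorem parseForest_word_node : ∀ l : List PTree, parseForest (word (node l)) = l
  | [] => by simp [word_node, parseForest, parseAux]
  | node m :: l => by
    rw [word_node, List.map_cons, List.flatten_cons, ← word_node,
      show true :: (word (node m) ++ [false]) ++ word (node l)
        = true :: word (node m) ++ false :: word (node l) by simp,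
      parseForest_bracket_append (isBalanced_word _) (isBalanced_word _),
      parseForest_word_node m, parseForest_word_node l]
termination_by l => sizeOf l
decreasing_by all_goals simp only [List.cons.sizeOf_spec, node.sizeOf_spec]; omega

theorem parseTree_word : ∀ T : PTree, parseTree (word T) = T
  | node l => congrArg node (parseForest_word_node l)

def components (w : List Bool) : List (List Bool) := blocks (parseTree w)

theorem components_nil : components [] = [] := rfl

theorem components_bracket_append {u v : List Bool} (hu : IsBalanced u) (hv : IsBalanced v) :
    components (true :: u ++ false :: v) = (true :: u ++ [false]) :: components v := by
  rw [components, parseTree, parseForest_bracket_append hu hv, blocks, List.map_cons,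
    ← parseTree, word_parseTree hu]
  rfl

theorem components_flatten_append {L : List (List Bool)} (hL : ∀ b ∈ L, IsBlock b)
    {v : List Bool} (hv : IsBalanced v) : components (L.flatten ++ v) = L ++ components v := by
  induction L with
  | nil => rfl
  | cons b L ih =>
    obtain ⟨u, hu, rfl⟩ := hL b (by simp)
    have hL' : ∀ b ∈ L, IsBlock b := fun b hb => hL b (by simp [hb])
    rw [show ((true :: u ++ [false]) :: L).flatten ++ v = true :: u ++ false :: (L.flatten ++ v)
      by simp, components_bracket_append hu ((IsBalanced.flatten hL').append hv), ih hL']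
    rfl

theorem components_flatten {L : List (List Bool)} (hL : ∀ b ∈ L, IsBlock b) :
    components L.flatten = L := by
  simpa [components_nil] using components_flatten_append hL .nil

theorem components_word (T : PTree) : components (word T) = blocks T := by
  rw [components, parseTree_word]

def splits {α : Type*} : List α → Multiset (List α × List α)
  | [] => {([], [])}
  | x :: w => ([], x :: w) ::ₘ (splits w).map fun p => (x :: p.1, p.2)

theorem append_eq_of_mem_splits {α : Type*} {w : List α} {p : List α × List α}
    (hp : p ∈ splits w) : p.1 ++ p.2 = w := by
  induction w generalizing p with
  | nil => simp_all [splits]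
  | cons x w ih =>
    simp only [splits, Multiset.mem_cons, Multiset.mem_map] at hp
    obtain rfl | ⟨q, hq, rfl⟩ := hp
    · rfl
    · simpa using ih hq

theorem forall_mem_of_mem_splits {α : Type*} {P : α → Prop} {w : List α} (hw : ∀ a ∈ w, P a)
    {p : List α × List α} (hp : p ∈ splits w) : (∀ a ∈ p.1, P a) ∧ ∀ a ∈ p.2, P a := by
  rw [← append_eq_of_mem_splits hp] at hw
  exact ⟨fun a ha => hw a (List.mem_append_left _ ha), fun a ha => hw a (List.mem_append_right _ ha)⟩

theorem bind_splits_fst {α β : Type*} (w : List α) (f : List α → List α → List α → Multiset β) :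
    (splits w).bind (fun p => (splits p.1).bind fun q => f q.1 q.2 p.2) =
      (splits w).bind (fun p => (splits p.2).bind fun q => f p.1 q.1 q.2) := by
  induction w generalizing f with
  | nil => simp [splits]
  | cons x w ih =>
    simp only [splits, Multiset.cons_bind, Multiset.bind_map, Multiset.bind_add,
      Multiset.singleton_bind, ih fun a b c => f (x :: a) b c]
    simp [add_assoc]

theorem bind_splits_fst_fst {α β : Type*} (w : List α)
    (f : List α → List α → List α → List α → Multiset β) :
    (splits w).bind (fun p => (splits p.1).bind fun q => (splits q.1).bind fun r =>
        f r.1 r.2 q.2 p.2) =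
      (splits w).bind (fun p => (splits p.2).bind fun q => (splits q.1).bind fun r =>
        f p.1 r.1 r.2 q.2) := by
  rw [bind_splits_fst w fun a b c => (splits a).bind fun r => f r.1 r.2 b c]
  have swap : ∀ p : List α × List α, ((splits p.2).bind fun q => (splits p.1).bind fun r =>
      f r.1 r.2 q.1 q.2) = (splits p.1).bind fun r => (splits p.2).bind fun q =>
      f r.1 r.2 q.1 q.2 := fun p => Multiset.bind_bind _ _
  simp only [swap]
  rw [bind_splits_fst w fun a b c => (splits c).bind fun q => f a b q.1 q.2]
  exact Multiset.bind_congr fun p _ => (bind_splits_fst p.2 (f p.1)).symm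

def mshuffles (B : List (List Bool)) (w : List Bool) : Multiset (List Bool) := shuffles B w

/-- Shuffles in which no block is placed after the last letter of the word. -/
def strictShuffles : List (List Bool) → List Bool → Multiset (List Bool)
  | [], w => {w}
  | _ :: _, [] => 0
  | b :: B, x :: w =>
      (strictShuffles B (x :: w)).map (b ++ ·) + (strictShuffles (b :: B) w).map (x :: ·)
termination_by B w => B.length + w.length

theorem mshuffles_nil_left (w : List Bool) : mshuffles [] w = {w} := by
  rw [mshuffles, shuffles]; rfl

theorem mshuffles_cons_nil (b : List Bool) (B : List (List Bool)) :
    mshuffles (b :: B) [] = (mshuffles B []).map (b ++ ·) := by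
  rw [mshuffles, shuffles]; rfl

theorem mshuffles_cons_cons (b : List Bool) (B : List (List Bool)) (x : Bool) (w : List Bool) :
    mshuffles (b :: B) (x :: w) =
      (mshuffles B (x :: w)).map (b ++ ·) + (mshuffles (b :: B) w).map (x :: ·) := by
  rw [mshuffles, shuffles, ← Multiset.coe_add]; rfl

theorem shuffles_nil_right : ∀ B : List (List Bool), shuffles B [] = [B.flatten]
  | [] => by rw [shuffles]; rfl
  | b :: B => by rw [shuffles, shuffles_nil_right B]; rfl

theorem mshuffles_nil_right (B : List (List Bool)) : mshuffles B [] = {B.flatten} := by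
  rw [mshuffles, shuffles_nil_right]; rfl

theorem mshuffles_cons_left (b : List Bool) (B : List (List Bool)) (w : List Bool) :
    mshuffles (b :: B) w = (splits w).bind fun p => (mshuffles B p.2).map (p.1 ++ b ++ ·) := by
  induction w with
  | nil => simp [mshuffles_cons_nil, splits]
  | cons x w ih =>
    simp [mshuffles_cons_cons, splits, ih, Multiset.map_bind, Multiset.bind_map]

theorem mshuffles_append_cons (C₁ : List (List Bool)) (c : List Bool) (C₂ : List (List Bool))
    (w : List Bool) :
    mshuffles (C₁ ++ c :: C₂) w = (splits w).bind fun p => (mshuffles C₁ p.1).bind fun α =>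
      (mshuffles C₂ p.2).map (α ++ c ++ ·) := by
  induction C₁ generalizing w with
  | nil => simp [mshuffles_cons_left, mshuffles_nil_left]
  | cons b C₁ ih =>
    simp only [List.cons_append, mshuffles_cons_left, ih, Multiset.map_bind, Multiset.map_map,
      Function.comp_def, List.append_assoc]
    rw [← bind_splits_fst w fun x y z => (mshuffles C₁ y).bind fun α =>
      (mshuffles C₂ z).map fun ζ => x ++ (b ++ (α ++ (c ++ ζ)))]
    simp [Multiset.bind_map, Multiset.bind_assoc]

theorem strictShuffles_nil_left (w : List Bool) : strictShuffles [] w = {w} := by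
  rw [strictShuffles]

theorem strictShuffles_cons_nil (b : List Bool) (B : List (List Bool)) :
    strictShuffles (b :: B) [] = 0 := by
  rw [strictShuffles]

theorem strictShuffles_cons_cons (b : List Bool) (B : List (List Bool)) (x : Bool)
    (w : List Bool) : strictShuffles (b :: B) (x :: w) =
      (strictShuffles B (x :: w)).map (b ++ ·) + (strictShuffles (b :: B) w).map (x :: ·) := by
  rw [strictShuffles]

/-- Cutting the word `s ++ t` at the seam: the blocks landing in `s` (not after its end) form a
prefix of `B`. -/
theorem mshuffles_append (B : List (List Bool)) (s t : List Bool) :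
    mshuffles B (s ++ t) = (splits B).bind fun p => (strictShuffles p.1 s).bind fun β =>
      (mshuffles p.2 t).map (β ++ ·) := by
  induction B, s using shuffles.induct with
  | case1 s => simp [splits, strictShuffles_nil_left, mshuffles_nil_left]
  | case2 b B _ => simp [splits, strictShuffles_nil_left, strictShuffles_cons_nil, Multiset.bind_map]
  | case3 b B x s ih₁ ih₂ =>
    rw [List.cons_append, mshuffles_cons_cons, ← List.cons_append, ih₁, ih₂]
    simp only [Multiset.map_bind, Multiset.map_map, Function.comp_apply, splits,
      Multiset.cons_bind, strictShuffles_nil_left, Multiset.singleton_bind, Multiset.bind_map,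
      Multiset.map_add, List.cons_append, strictShuffles_cons_cons, Multiset.add_bind,
      List.append_assoc, Multiset.bind_add]
    abel

theorem mshuffles_eq_bind_strictShuffles (B : List (List Bool)) (w : List Bool) :
    mshuffles B w = (splits B).bind fun p => (strictShuffles p.1 w).map (· ++ p.2.flatten) := by
  simpa [mshuffles_nil_right] using mshuffles_append B w []

theorem strictShuffles_append_singleton (B : List (List Bool)) (w : List Bool) (x : Bool) :
    strictShuffles B (w ++ [x]) = (mshuffles B w).map (· ++ [x]) := by
  induction B, w using shuffles.induct with
  | case1 w => simp [strictShuffles_nil_left, mshuffles_nil_left]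
  | case2 b B ih =>
    simp_all [strictShuffles_cons_cons, strictShuffles_cons_nil, mshuffles_cons_nil]
  | case3 b B y w ih₁ ih₂ =>
    simp_all [strictShuffles_cons_cons, mshuffles_cons_cons]

theorem strictShuffles_bracket (B : List (List Bool)) (w : List Bool) :
    strictShuffles B (true :: w ++ [false]) = (splits B).bind fun p =>
      (mshuffles p.2 w).map (p.1.flatten ++ true :: · ++ [false]) := by
  induction B with
  | nil => simp [splits, strictShuffles_nil_left, mshuffles_nil_left]
  | cons b B ih =>
    rw [List.cons_append, strictShuffles_cons_cons, ← List.cons_append, ih,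
      strictShuffles_append_singleton]
    simp [splits, Multiset.map_bind, Multiset.bind_map, add_comm]

/-- The common expansion of both sides of `mshuffles_assoc` for `w' = ⟨p⟩q`. The word `w'' = xy`
is cut where the component `⟨p⟩` goes; of the splitting `B = B₁B₂B₃B₄`, the blocks of `B₁` are
shuffled into `x`, those of `B₂` sit just before `⟨p⟩`, those of `B₃` are shuffled into `p`,
and those of `B₄` into a shuffle `u` of the components of `q` into `y`. -/
def assocTerm (p q w'' : List Bool) (B₁ B₂ B₃ B₄ : List (List Bool)) : Multiset (List Bool) :=
  (splits w'').bind fun xy => (mshuffles B₃ p).bind fun γ => (strictShuffles B₁ xy.1).bind fun δ =>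
    (mshuffles (components q) xy.2).bind fun u =>
      (mshuffles B₄ u).map fun z => δ ++ B₂.flatten ++ true :: γ ++ false :: z

theorem mshuffles_components_flatten_append {C : List (List Bool)} (hC : ∀ b ∈ C, IsBlock b)
    {γ ρ : List Bool} (hγ : IsBalanced γ) (hρ : IsBalanced ρ) (w : List Bool) :
    mshuffles (components (C.flatten ++ true :: γ ++ false :: ρ)) w =
      (splits w).bind fun xy => (mshuffles C xy.1).bind fun α =>
        (mshuffles (components ρ) xy.2).map fun ζ => α ++ true :: γ ++ false :: ζ := by
  rw [List.append_assoc, components_flatten_append hC (hγ.bracket_append hρ),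
    components_bracket_append hγ hρ, mshuffles_append_cons]
  simp

theorem mshuffles_bracket_append_bind_components {B : List (List Bool)}
    (hB : ∀ b ∈ B, IsBlock b) {p q : List Bool} (hp : IsBalanced p) (hq : IsBalanced q)
    (ih : ∀ B' : List (List Bool), (∀ b ∈ B', IsBlock b) → ∀ y : List Bool,
      (mshuffles B' q).bind (fun ρ => mshuffles (components ρ) y) =
        (mshuffles (components q) y).bind (mshuffles B'))
    (w'' : List Bool) :
    (mshuffles B (true :: p ++ false :: q)).bind (fun v => mshuffles (components v) w'') =
      (splits B).bind fun P => (splits P.1).bind fun Q => (splits Q.1).bind fun R =>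
        assocTerm p q w'' R.1 R.2 Q.2 P.2 := by
  rw [show true :: p ++ false :: q = (true :: p ++ [false]) ++ q by simp, mshuffles_append]
  simp only [Multiset.bind_assoc, strictShuffles_bracket, Multiset.bind_map]
  refine Multiset.bind_congr fun P hP => ?_
  refine Multiset.bind_congr fun Q hQ => ?_
  obtain ⟨hP₁, hP₂⟩ := forall_mem_of_mem_splits hB hP
  obtain ⟨hQ₁, hQ₂⟩ := forall_mem_of_mem_splits hP₁ hQ
  have ih' : ∀ y (g : List Bool → List Bool),
      (mshuffles P.2 q).bind (fun ρ => (mshuffles (components ρ) y).map g) =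
        (mshuffles (components q) y).bind fun u => (mshuffles P.2 u).map g := by
    intro y g
    rw [← Multiset.map_bind, ih P.2 hP₂, Multiset.map_bind]
  calc ((mshuffles Q.2 p).bind fun γ => (mshuffles P.2 q).bind fun ρ =>
          mshuffles (components (Q.1.flatten ++ true :: γ ++ [false] ++ ρ)) w'')
      = (mshuffles Q.2 p).bind fun γ => (mshuffles P.2 q).bind fun ρ =>
          (splits w'').bind fun xy => (mshuffles Q.1 xy.1).bind fun α =>
            (mshuffles (components ρ) xy.2).map fun ζ => α ++ true :: γ ++ false :: ζ := by
        refine Multiset.bind_congr fun γ hγ => Multiset.bind_congr fun ρ hρ => ?_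
        rw [← mshuffles_components_flatten_append hQ₁
          (IsBalanced.of_mem_shuffles hQ₂ hp hγ) (IsBalanced.of_mem_shuffles hP₂ hq hρ)]
        simp
    _ = _ := by
        simp only [Multiset.bind_bind (mshuffles P.2 q), ih']
        simp only [Multiset.bind_bind _ (splits w''), mshuffles_eq_bind_strictShuffles Q.1,
          Multiset.bind_assoc, Multiset.bind_map, assocTerm]
        simp only [Multiset.bind_bind _ (splits Q.1)]

theorem mshuffles_append_bracket_append (B : List (List Bool)) (x p u : List Bool) :
    mshuffles B (x ++ (true :: p ++ [false]) ++ u) =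
      (splits B).bind fun P => (strictShuffles P.1 x).bind fun δ =>
        (splits P.2).bind fun Q => (splits Q.1).bind fun R => (mshuffles R.2 p).bind fun γ =>
          (mshuffles Q.2 u).map fun z => δ ++ R.1.flatten ++ true :: γ ++ false :: z := by
  simp only [List.append_assoc x, mshuffles_append B x, mshuffles_append _ (true :: p ++ [false]) u,
    strictShuffles_bracket, Multiset.map_bind, Multiset.bind_map, Multiset.map_map,
    Function.comp_def, Multiset.bind_assoc]
  simp

theorem mshuffles_components_bracket_append_bind (B : List (List Bool)) {p q : List Bool}
    (hp : IsBalanced p) (hq : IsBalanced q) (w'' : List Bool) :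
    (mshuffles (components (true :: p ++ false :: q)) w'').bind (mshuffles B) =
      (splits B).bind fun P => (splits P.2).bind fun Q => (splits Q.1).bind fun R =>
        assocTerm p q w'' P.1 R.1 R.2 Q.2 := by
  rw [components_bracket_append hp hq, mshuffles_cons_left]
  simp only [Multiset.bind_assoc, Multiset.bind_map, mshuffles_append_bracket_append, assocTerm]
  simp only [Multiset.bind_bind _ (splits B)]
  refine Multiset.bind_congr fun P _ => ?_
  simp only [Multiset.bind_bind _ (splits P.2)]
  refine Multiset.bind_congr fun Q _ => ?_
  simp only [Multiset.bind_bind _ (splits Q.1)]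
  refine Multiset.bind_congr fun R _ => ?_
  simp only [Multiset.bind_bind _ (mshuffles R.2 p)]
  simp only [Multiset.bind_bind (mshuffles (components q) _)]

theorem mshuffles_assoc {w' : List Bool} (hw' : IsBalanced w')
    {B : List (List Bool)} (hB : ∀ b ∈ B, IsBlock b) (w'' : List Bool) :
    (mshuffles B w').bind (fun v => mshuffles (components v) w'') =
      (mshuffles (components w') w'').bind (mshuffles B) := by
  induction hw' generalizing B w'' with
  | nil =>
    rw [mshuffles_nil_right, components_nil, mshuffles_nil_left, Multiset.singleton_bind,
      Multiset.singleton_bind, components_flatten hB]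
  | bracket_append hp hq _ ihq =>
    rw [mshuffles_bracket_append_bind_components hB hp hq (fun _ hB' => ihq hB'),
      mshuffles_components_bracket_append_bind B hp hq,
      bind_splits_fst_fst B fun B₁ B₂ B₃ B₄ => assocTerm _ _ w'' B₁ B₂ B₃ B₄]

section Bilinear

variable {k : Type*} [CommSemiring k]

theorem pMulF_single_single (T T' : PTree) (x y : k) :
    pMulF (Finsupp.single T x) (Finsupp.single T' y) = (x * y) • pMul k T T' := by
  simp [pMulF]

theorem pMulF_zero_left (g : PTree →₀ k) : pMulF 0 g = 0 := by simp [pMulF]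

theorem pMulF_zero_right (f : PTree →₀ k) : pMulF f 0 = 0 := by simp [pMulF]

theorem pMulF_add_left (f₁ f₂ g : PTree →₀ k) :
    pMulF (f₁ + f₂) g = pMulF f₁ g + pMulF f₂ g :=
  Finsupp.sum_add_index' (by simp) fun T x₁ x₂ => by
    simp only [add_mul, add_smul, Finsupp.sum_add]

theorem pMulF_add_right (f g₁ g₂ : PTree →₀ k) :
    pMulF f (g₁ + g₂) = pMulF f g₁ + pMulF f g₂ := by
  simp only [pMulF, ← Finsupp.sum_add]
  exact Finsupp.sum_congr fun T _ =>
    Finsupp.sum_add_index' (by simp) fun T' y₁ y₂ => by simp only [mul_add, add_smul]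

theorem pMulF_smul_left (c : k) (f g : PTree →₀ k) : pMulF (c • f) g = c • pMulF f g := by
  rw [pMulF, pMulF, Finsupp.sum_smul_index (by simp), Finsupp.smul_sum]
  simp only [Finsupp.smul_sum, smul_smul, mul_assoc]

theorem pMulF_smul_right (c : k) (f g : PTree →₀ k) : pMulF f (c • g) = c • pMulF f g := by
  rw [pMulF, pMulF, Finsupp.smul_sum]
  refine Finsupp.sum_congr fun T _ => ?_
  rw [Finsupp.sum_smul_index (by simp), Finsupp.smul_sum]
  simp only [smul_smul, mul_left_comm]

theorem pMulF_multiset_sum_left (s : Multiset (PTree →₀ k)) (g : PTree →₀ k) :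
    pMulF s.sum g = (s.map (pMulF · g)).sum :=
  map_multiset_sum (⟨⟨(pMulF · g), pMulF_zero_left g⟩, fun f₁ f₂ => pMulF_add_left f₁ f₂ g⟩ :
    (PTree →₀ k) →+ (PTree →₀ k)) s

theorem pMulF_multiset_sum_right (f : PTree →₀ k) (s : Multiset (PTree →₀ k)) :
    pMulF f s.sum = (s.map (pMulF f)).sum :=
  map_multiset_sum (⟨⟨pMulF f, pMulF_zero_right f⟩, pMulF_add_right f⟩ :
    (PTree →₀ k) →+ (PTree →₀ k)) s

end Bilinear

section Product

variable (k : Type*) [CommSemiring k]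

noncomputable def ofWords (m : Multiset (List Bool)) : PTree →₀ k :=
  (m.map fun w => Finsupp.single (parseTree w) 1).sum

theorem pMul_eq_ofWords (T T' : PTree) :
    pMul k T T' = ofWords k (mshuffles (blocks T) (word T')) := by
  rw [pMul, ofWords, mshuffles, Multiset.map_coe, Multiset.sum_coe]

theorem ofWords_bind (m : Multiset (List Bool)) (g : List Bool → Multiset (List Bool)) :
    ofWords k (m.bind g) = (m.map fun w => ofWords k (g w)).sum := by
  simp [ofWords, Multiset.map_bind, Multiset.sum_bind]

theorem pMulF_pMul_single_one (T T' T'' : PTree) :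
    pMulF (pMul k T T') (Finsupp.single T'' 1) = pMulF (Finsupp.single T 1) (pMul k T' T'') := by
  have hB := isBlock_of_mem_blocks T
  rw [pMul_eq_ofWords, pMul_eq_ofWords, ofWords, ofWords, pMulF_multiset_sum_left,
    pMulF_multiset_sum_right, Multiset.map_map, Multiset.map_map]
  have hleft : ∀ v, pMulF (Finsupp.single (parseTree v) (1 : k)) (Finsupp.single T'' 1) =
      ofWords k (mshuffles (components v) (word T'')) := fun v => by
    rw [pMulF_single_single, one_mul, one_smul, pMul_eq_ofWords, components]
  have hright : ∀ u ∈ mshuffles (blocks T') (word T''),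
      pMulF (Finsupp.single T (1 : k)) (Finsupp.single (parseTree u) 1) =
        ofWords k (mshuffles (blocks T) u) := fun u hu => by
    rw [pMulF_single_single, one_mul, one_smul, pMul_eq_ofWords, word_parseTree
      (IsBalanced.of_mem_shuffles (isBlock_of_mem_blocks T') (isBalanced_word T'') hu)]
  simp only [Function.comp_def, hleft, Multiset.map_congr rfl hright, ← ofWords_bind]
  rw [mshuffles_assoc (isBalanced_word T') hB, components_word]

theorem pMulF_assoc (a b c : PTree →₀ k) : pMulF (pMulF a b) c = pMulF a (pMulF b c) := by
  induction a using Finsupp.induction_linear with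
  | zero => simp only [pMulF_zero_left]
  | add a a' ha ha' => simp only [pMulF_add_left, ha, ha']
  | single T x =>
    induction b using Finsupp.induction_linear with
    | zero => simp only [pMulF_zero_left, pMulF_zero_right]
    | add b b' hb hb' => simp only [pMulF_add_left, pMulF_add_right, hb, hb']
    | single T' y =>
      induction c using Finsupp.induction_linear with
      | zero => simp only [pMulF_zero_right]
      | add c c' hc hc' => simp only [pMulF_add_right, hc, hc']
      | single T'' z =>
        rw [← Finsupp.smul_single_one T x, ← Finsupp.smul_single_one T' y,
          ← Finsupp.smul_single_one T'' z]
        simp only [pMulF_smul_left, pMulF_smul_right, pMulF_single_single, mul_one, one_smul,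
          pMulF_pMul_single_one, smul_smul]
        congr 1
        ring

theorem pMul_one_left (T : PTree) : pMul k (node []) T = Finsupp.single T 1 := by
  simp [pMul, blocks, shuffles, parseTree_word]

theorem pMul_one_right (T : PTree) : pMul k T (node []) = Finsupp.single T 1 := by
  rw [pMul, show word (node []) = [] by simp [word_node], shuffles_nil_right,
    ← word_eq_flatten_blocks]
  simp [parseTree_word]

theorem pMulF_one_left (a : PTree →₀ k) : pMulF (Finsupp.single (node []) 1) a = a := by
  induction a using Finsupp.induction_linear with
  | zero => exact pMulF_zero_right _
  | add a a' ha ha' => rw [pMulF_add_right, ha, ha']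
  | single T x => rw [pMulF_single_single, pMul_one_left, one_mul, Finsupp.smul_single_one]

theorem pMulF_one_right (a : PTree →₀ k) : pMulF a (Finsupp.single (node []) 1) = a := by
  induction a using Finsupp.induction_linear with
  | zero => exact pMulF_zero_left _
  | add a a' ha ha' => rw [pMulF_add_left, ha, ha']
  | single T x => rw [pMulF_single_single, pMul_one_right, mul_one, Finsupp.smul_single_one]

end Product

theorem kP_product_associative_general (k : Type*) [Field k] :
    (∀ a b c : PTree →₀ k, pMulF (pMulF a b) c = pMulF a (pMulF b c)) ∧
    (∀ a : PTree →₀ k,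
      pMulF (Finsupp.single (PTree.node []) (1 : k)) a = a ∧
      pMulF a (Finsupp.single (PTree.node []) (1 : k)) = a) := by
  exact ⟨pMulF_assoc k, fun a => ⟨pMulF_one_left k a, pMulF_one_right k a⟩⟩

/-- The asymmetric-shuffle product `∘` on the span `kP` of planar
rooted trees is associative, with the one-vertex tree `•` as two-sided unit. -/
theorem kP_product_associative (k : Type*) [Field k] [CharZero k] :
    (∀ a b c : PTree →₀ k, pMulF (pMulF a b) c = pMulF a (pMulF b c)) ∧
    (∀ a : PTree →₀ k,
      pMulF (Finsupp.single (PTree.node []) (1 : k)) a = a ∧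
      pMulF a (Finsupp.single (PTree.node []) (1 : k)) = a) :=
  kP_product_associative_general k
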